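/- arXiv:2006.01436 — 3 statements merged into one kernel-verified Lean document; each statement's English description precedes it below -/
import Mathlib

section
/- Let B be an L×L real positive definite matrix with maximum eigenvalue λ_M and minimum eigenvalue λ_m > 0. Then for all x, y ∈ ℝ^L with ⟨x, y⟩ = 0, we have |xᵀBy|² ≤ ((λ_M − λ_m)/(λ_M + λ_m))² (xᵀBx)(yᵀBy). -/
/-!
For `g`-orthogonal `x`, `y` the vectors `s • x + y` and `s • x - y` have the same `g`-length,
so the Rayleigh bounds `m g ≤ f ≤ M g` give `m f(s x + y) ≤ M f(s x - y)` for every real `s`.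
Expanded, this says that a quadratic polynomial in `s` with coefficients
`(M - m) f(x, x)`, `-2 (M + m) f(x, y)`, `(M - m) f(y, y)` is nonnegative, and its
discriminant being nonpositive is Wielandt's inequality.
-/

open Matrix

namespace LinearMap.BilinForm

variable {V : Type*} [AddCommGroup V] [Module ℝ V] {f g : LinearMap.BilinForm ℝ V}

theorem apply_smul_add_smul_self (hf : f.IsSymm) (x y : V) (s t : ℝ) :
    f (s • x + t • y) (s • x + t • y) = s ^ 2 * f x x + 2 * s * t * f x y + t ^ 2 * f y y := by
  simp only [map_add, map_smul, LinearMap.add_apply, LinearMap.smul_apply, smul_eq_mul, hf.eq y x]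
  ring

theorem mul_apply_self_le_mul_apply_self {m M : ℝ} (hm : 0 ≤ m) (hM : 0 ≤ M)
    (hlo : ∀ z, m * g z z ≤ f z z) (hhi : ∀ z, f z z ≤ M * g z z) {u v : V}
    (huv : g u u = g v v) : m * f u u ≤ M * f v v :=
  calc m * f u u ≤ m * (M * g u u) := mul_le_mul_of_nonneg_left (hhi u) hm
    _ = M * (m * g v v) := by rw [huv]; ring
    _ ≤ M * f v v := mul_le_mul_of_nonneg_left (hlo v) hM

theorem sq_mul_apply_le_of_rayleigh_bounds (hf : f.IsSymm) (hg : g.IsSymm) {m M : ℝ}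
    (hm : 0 ≤ m) (hM : 0 ≤ M) (hlo : ∀ z, m * g z z ≤ f z z) (hhi : ∀ z, f z z ≤ M * g z z)
    {x y : V} (hxy : g x y = 0) :
    ((M + m) * f x y) ^ 2 ≤ (M - m) ^ 2 * (f x x * f y y) := by
  have hquad : ∀ s : ℝ,
      0 ≤ (M - m) * f x x * (s * s) + -(2 * (M + m) * f x y) * s + (M - m) * f y y := by
    intro s
    have key := mul_apply_self_le_mul_apply_self hm hM hlo hhi
      (u := s • x + (1 : ℝ) • y) (v := s • x + (-1 : ℝ) • y)
      (by simp only [apply_smul_add_smul_self hg, hxy]; ring)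
    rw [apply_smul_add_smul_self hf, apply_smul_add_smul_self hf] at key
    linear_combination key
  have hdisc := discrim_le_zero hquad
  rw [discrim] at hdisc
  linear_combination hdisc / 4

end LinearMap.BilinForm

/-- Wielandt's inequality: for a positive definite matrix `B` with smallest and
largest eigenvalues `lamm`, `lamM` (characterized by Rayleigh-quotient bounds),
and orthogonal vectors `x`, `y`,
`|xᵀBy|² ≤ ((λ_M − λ_m)/(λ_M + λ_m))² (xᵀBx)(yᵀBy)`. -/
theorem wielandt_inequality (L : ℕ) (B : Matrix (Fin L) (Fin L) ℝ)
    (hB : B.PosDef) (lamM lamm : ℝ) (hm : 0 < lamm)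
    (hlo : ∀ x : Fin L → ℝ, lamm * (x ⬝ᵥ x) ≤ x ⬝ᵥ B *ᵥ x)
    (hhi : ∀ x : Fin L → ℝ, x ⬝ᵥ B *ᵥ x ≤ lamM * (x ⬝ᵥ x))
    (x y : Fin L → ℝ) (hxy : x ⬝ᵥ y = 0) :
    (x ⬝ᵥ B *ᵥ y) ^ 2 ≤
      ((lamM - lamm) / (lamM + lamm)) ^ 2 * ((x ⬝ᵥ B *ᵥ x) * (y ⬝ᵥ B *ᵥ y)) := by
  rcases eq_or_ne x 0 with rfl | hx
  · simp
  have hle : lamm ≤ lamM := le_of_mul_le_mul_right ((hlo x).trans (hhi x))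
    (by simpa using dotProduct_star_self_pos_iff.mpr hx)
  have hsymm : (toBilin' B).IsSymm :=
    isSymm_toBilin'_iff_isSymm.mpr (isHermitian_iff_isSymm.mp hB.isHermitian)
  have hsymm_one : (toBilin' (1 : Matrix (Fin L) (Fin L) ℝ)).IsSymm :=
    isSymm_toBilin'_iff_isSymm.mpr isSymm_one
  have key := LinearMap.BilinForm.sq_mul_apply_le_of_rayleigh_bounds hsymm hsymm_one
    hm.le (hm.trans_le hle).le (by simpa [toBilin'_apply'] using hlo)
    (by simpa [toBilin'_apply'] using hhi)
    (by simpa [toBilin'_apply'] using hxy)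
  simp only [toBilin'_apply'] at key
  rw [div_pow, div_mul_eq_mul_div, le_div_iff₀ (pow_pos (by linarith) 2)]
  linear_combination key
end

section
/- Let Φ be an m×n real matrix satisfying the restricted isometry property of order |S|+|Λ| with constant δ, where S and Λ are disjoint subsets of {1,…,n}. If y = Φ_Λ x_Λ for some vector x supported on Λ, then the orthogonal projection P_S of y onto the column span of Φ_S satisfies ‖P_S y‖₂ ≤ δ ‖y‖₂. -/
/-!
Write `b = ⟨Φu, Φx⟩`, `P = ‖Φu‖²`, `Q = ‖Φx‖²`. Since `u ⊥ x`, the vectors `tu + x` and `tu - x` have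
the same norm, so RIP bounds `(1 - δ)‖Φ(tu + x)‖² ≤ (1 - δ²)‖tu + x‖² ≤ (1 + δ)‖Φ(tu - x)‖²`,
which expands to `2tb ≤ δ(t²P + Q)` for every `t`. The discriminant of this quadratic gives the
Wielandt-type bound `b² ≤ δ²PQ`. Orthogonality of `y - p` to the columns of `Φ_S` gives `b = P`
and `Q = ‖y‖²`, hence `P ≤ δ²‖y‖²`.
-/

open Matrix

section

variable {m n : Type*} [Fintype m] [Fintype n]

def IsNearIsometryAt (Φ : Matrix m n ℝ) (δ : ℝ) (z : n → ℝ) : Prop :=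
  (1 - δ) * (z ⬝ᵥ z) ≤ (Φ *ᵥ z) ⬝ᵥ (Φ *ᵥ z) ∧ (Φ *ᵥ z) ⬝ᵥ (Φ *ᵥ z) ≤ (1 + δ) * (z ⬝ᵥ z)

theorem dotProduct_eq_zero_of_eq_zero_on_of_eq_zero_off {R : Type*} [NonUnitalNonAssocSemiring R]
    {v w : n → R} (S : Finset n) (hv : ∀ j ∈ S, v j = 0) (hw : ∀ j ∉ S, w j = 0) :
    v ⬝ᵥ w = 0 :=
  Finset.sum_eq_zero fun j _ => by
    by_cases hj : j ∈ S
    · rw [hv j hj, zero_mul]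
    · rw [hw j hj, mul_zero]

theorem card_filter_ne_zero_le {R : Type*} [Zero R] [DecidableEq R] {z : n → R} (S : Finset n)
    (hz : ∀ j ∉ S, z j = 0) : (Finset.univ.filter fun j => z j ≠ 0).card ≤ S.card :=
  Finset.card_le_card fun j hj => by
    by_contra hjS
    exact (Finset.mem_filter.mp hj).2 (hz j hjS)

theorem mulVec_dotProduct_eq_zero {R : Type*} [CommSemiring R] {Φ : Matrix m n R} {u : n → R}
    {w : m → R} (S : Finset n) (hu : ∀ j ∉ S, u j = 0)
    (hw : ∀ j ∈ S, (fun i => Φ i j) ⬝ᵥ w = 0) : (Φ *ᵥ u) ⬝ᵥ w = 0 := by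
  rw [dotProduct_comm, dotProduct_mulVec]
  refine dotProduct_eq_zero_of_eq_zero_on_of_eq_zero_off S (fun j hj => ?_) hu
  rw [← hw j hj, dotProduct_comm]
  rfl

theorem two_mul_dotProduct_mulVec_le {Φ : Matrix m n ℝ} {δ : ℝ} (hδ : |δ| ≤ 1) {u x : n → ℝ}
    (hux : u ⬝ᵥ x = 0) (hadd : IsNearIsometryAt Φ δ (u + x))
    (hsub : IsNearIsometryAt Φ δ (u - x)) :
    2 * ((Φ *ᵥ u) ⬝ᵥ (Φ *ᵥ x)) ≤ δ * ((Φ *ᵥ u) ⬝ᵥ (Φ *ᵥ u) + (Φ *ᵥ x) ⬝ᵥ (Φ *ᵥ x)) := by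
  obtain ⟨hδl, hδr⟩ := abs_le.mp hδ
  have hxu : x ⬝ᵥ u = 0 := by rw [dotProduct_comm, hux]
  have hsq : (u + x) ⬝ᵥ (u + x) = (u - x) ⬝ᵥ (u - x) := by
    simp only [add_dotProduct, dotProduct_add, sub_dotProduct, dotProduct_sub, hux, hxu]
    ring
  have hmid := mul_le_mul_of_nonneg_left hadd.2 (sub_nonneg.mpr hδr)
  have hlow := mul_le_mul_of_nonneg_left hsub.1 (neg_le_iff_add_nonneg'.mp hδl)
  rw [hsq] at hmid
  simp only [mulVec_add, mulVec_sub, add_dotProduct, dotProduct_add, sub_dotProduct,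
    dotProduct_sub, dotProduct_comm (Φ *ᵥ x) (Φ *ᵥ u)] at hmid hlow
  linarith

theorem sq_le_mul_of_forall_two_mul_le {a b c δ : ℝ} (h : ∀ t, 2 * t * b ≤ δ * (t ^ 2 * a + c)) :
    b ^ 2 ≤ δ ^ 2 * (a * c) := by
  have hd : discrim (δ * a) (-(2 * b)) (δ * c) ≤ 0 :=
    discrim_le_zero fun t => by linarith [h t]
  rw [discrim] at hd
  linarith

theorem sq_dotProduct_mulVec_le {Φ : Matrix m n ℝ} {δ : ℝ} (hδ : |δ| ≤ 1) {u x : n → ℝ}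
    (hux : u ⬝ᵥ x = 0) (hnear : ∀ s t : ℝ, IsNearIsometryAt Φ δ (s • u + t • x)) :
    ((Φ *ᵥ u) ⬝ᵥ (Φ *ᵥ x)) ^ 2 ≤ δ ^ 2 * ((Φ *ᵥ u) ⬝ᵥ (Φ *ᵥ u) * (Φ *ᵥ x) ⬝ᵥ (Φ *ᵥ x)) := by
  refine sq_le_mul_of_forall_two_mul_le fun t => ?_
  have htux : (t • u) ⬝ᵥ x = 0 := by rw [smul_dotProduct, hux, smul_zero]
  have key := two_mul_dotProduct_mulVec_le hδ htux (by simpa using hnear t 1)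
    (by simpa [sub_eq_add_neg] using hnear t (-1))
  simp only [mulVec_smul, smul_dotProduct, dotProduct_smul, smul_eq_mul] at key
  linarith

end

theorem Real.sqrt_le_mul_sqrt_of_sq_le_sq_mul {P Q δ : ℝ} (hδ : 0 ≤ δ) (hP : 0 ≤ P)
    (h : P ^ 2 ≤ δ ^ 2 * (P * Q)) : √P ≤ δ * √Q := by
  rcases hP.eq_or_lt with rfl | hP
  · rw [Real.sqrt_zero]
    positivity
  · have hle : P ≤ δ ^ 2 * Q := le_of_mul_le_mul_right (by linarith) hP
    calc √P ≤ √(δ ^ 2 * Q) := Real.sqrt_le_sqrt hle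
      _ = δ * √Q := by rw [Real.sqrt_mul (sq_nonneg δ), Real.sqrt_sq hδ]

/-- If `Φ` satisfies RIP of order `|S| + |Λ|` with constant `δ`, `S` and `Λ` are
disjoint, `y = Φ_Λ x_Λ`, and `p` is the orthogonal projection of `y` onto the
column span of `Φ_S`, then `‖p‖₂ ≤ δ‖y‖₂`. -/
theorem norm_of_projection_upper_bound (m n : ℕ) (Φ : Matrix (Fin m) (Fin n) ℝ)
    (δ : ℝ) (hδ0 : 0 ≤ δ) (hδ1 : δ < 1)
    (S Λ : Finset (Fin n)) (hdisj : Disjoint S Λ)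
    (hRIP : ∀ z : Fin n → ℝ,
      (Finset.univ.filter fun j => z j ≠ 0).card ≤ S.card + Λ.card →
      (1 - δ) * (z ⬝ᵥ z) ≤ (Φ *ᵥ z) ⬝ᵥ (Φ *ᵥ z) ∧
        (Φ *ᵥ z) ⬝ᵥ (Φ *ᵥ z) ≤ (1 + δ) * (z ⬝ᵥ z))
    (x : Fin n → ℝ) (hxsupp : ∀ j, j ∉ Λ → x j = 0)
    (y : Fin m → ℝ) (hy : y = Φ *ᵥ x)
    -- `p` is the orthogonal projection of `y` onto the span of the columns of `Φ` indexed by `S`: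
    (p : Fin m → ℝ) (u : Fin n → ℝ) (husupp : ∀ j, j ∉ S → u j = 0)
    (hp : p = Φ *ᵥ u)
    (horth : ∀ j ∈ S, (fun i => Φ i j) ⬝ᵥ (y - p) = 0) :
    Real.sqrt (p ⬝ᵥ p) ≤ δ * Real.sqrt (y ⬝ᵥ y) := by
  have hxu : x ⬝ᵥ u = 0 := dotProduct_eq_zero_of_eq_zero_on_of_eq_zero_off S
    (fun j hj => hxsupp j (Finset.disjoint_left.mp hdisj hj)) husupp
  have hnear (s t : ℝ) : IsNearIsometryAt Φ δ (s • u + t • x) := by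
    refine hRIP _ ((card_filter_ne_zero_le (S ∪ Λ) fun j hj => ?_).trans
      (Finset.card_union_le S Λ))
    obtain ⟨hjS, hjΛ⟩ := Finset.notMem_union.mp hj
    simp [husupp j hjS, hxsupp j hjΛ]
  have hpy : p ⬝ᵥ y = p ⬝ᵥ p := by
    rw [← sub_eq_zero, ← dotProduct_sub, hp]
    exact mulVec_dotProduct_eq_zero S husupp (hp ▸ horth)
  have hW := sq_dotProduct_mulVec_le (abs_le.mpr ⟨by linarith, hδ1.le⟩)
    (by rwa [dotProduct_comm]) hnear
  rw [← hp, ← hy, hpy] at hW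
  exact Real.sqrt_le_mul_sqrt_of_sq_le_sq_mul hδ0 (dotProduct_self_star_nonneg p) hW
end

section
/- Let Φ be an m×n real matrix satisfying RIP of order |S|+|Λ|+1 with constant δ, where S and Λ are disjoint subsets of {1,…,n}, and let y = Φ_Λ x_Λ. Then for every index i ∉ S ∪ Λ, |φᵢᵀ (I − P_S) y| ≤ δ ‖(I − P_S) φᵢ‖₂ ‖y‖₂, where φᵢ is the i-th column of Φ and P_S is the orthogonal projection onto the span of the columns of Φ indexed by S. -/
open Matrix


lemma key' (δ V X R Y C : ℝ) (hδ0 : 0 ≤ δ) (hδ1 : δ ≤ 1) (hV : 0 ≤ V) (hX : 0 ≤ X)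
    (hR1 : (1-δ)*V ≤ R) (hR2 : R ≤ (1+δ)*V) (hY1 : (1-δ)*X ≤ Y) (hY2 : Y ≤ (1+δ)*X)
    (h1 : C^2 ≤ (R-(1-δ)*V)*(Y-(1-δ)*X)) (h2 : C^2 ≤ ((1+δ)*V-R)*((1+δ)*X-Y)) :
    C^2 ≤ δ^2*R*Y := by
  rcases le_or_gt ((R-V)*X + (Y-X)*V) 0 with hc | hc
  · refine h1.trans ?_
    rcases le_or_gt ((R-V)*(Y-X)) 0 with hab | hab
    · nlinarith [mul_nonneg (mul_nonneg (sub_nonneg.2 hδ1) hδ0) (neg_nonneg.2 hc),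
        mul_nonneg (sub_nonneg.2 hδ1) (mul_nonneg (by linarith : (0:ℝ) ≤ 1+δ) (neg_nonneg.2 hab))]
    · have haneg : R - V < 0 := by
        by_contra h
        push_neg at h
        have hb : 0 < Y - X := by
          rcases lt_trichotomy (Y-X) 0 with h'|h'|h'
          · nlinarith
          · nlinarith
          · exact h'
        have ha : 0 < R - V := by nlinarith
        have hV0 : V = 0 := by nlinarith [mul_nonneg h hX]
        nlinarith
      have hbneg : Y - X < 0 := by nlinarith
      nlinarith [mul_nonneg (sub_nonneg.2 hδ1)
          (mul_nonneg (by linarith : (0:ℝ) ≤ V - R) (by linarith : (0:ℝ) ≤ δ*X - (X - Y))),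
        mul_nonneg (mul_nonneg (sub_nonneg.2 hδ1) hδ0)
          (mul_nonneg (by linarith : (0:ℝ) ≤ X - Y) (by linarith : (0:ℝ) ≤ δ*V - (V - R))),
        mul_nonneg (mul_nonneg (mul_nonneg (sub_nonneg.2 hδ1) hδ0) (sub_nonneg.2 hδ1))
          (mul_nonneg hV (by linarith : (0:ℝ) ≤ X - Y))]
  · refine h2.trans ?_
    rcases le_or_gt ((R-V)*(Y-X)) 0 with hab | hab
    · nlinarith [mul_nonneg (mul_nonneg (by linarith : (0:ℝ) ≤ 1+δ) hδ0) hc.le,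
        mul_nonneg (by linarith : (0:ℝ) ≤ 1+δ) (mul_nonneg (sub_nonneg.2 hδ1) (neg_nonneg.2 hab))]
    · have hapos : 0 < R - V := by
        by_contra h
        push_neg at h
        have hb : Y - X < 0 := by
          rcases lt_trichotomy (Y-X) 0 with h'|h'|h'
          · exact h'
          · nlinarith
          · nlinarith
        have ha : R - V < 0 := by nlinarith
        have hX0 : X = 0 := by nlinarith [mul_nonneg (neg_nonneg.2 h) hX, mul_nonneg (neg_nonneg.2 hb.le) hV]
        nlinarith
      have hbpos : 0 < Y - X := by nlinarith
      nlinarith [mul_nonneg (by linarith : (0:ℝ) ≤ 1+δ)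
          (mul_nonneg hbpos.le (by linarith : (0:ℝ) ≤ δ*V - (R - V))),
        mul_nonneg (mul_nonneg (by linarith : (0:ℝ) ≤ 1+δ) hδ0) (mul_nonneg hapos.le hX),
        mul_nonneg (mul_nonneg (by linarith : (0:ℝ) ≤ 1+δ) hδ0) (mul_nonneg hapos.le hbpos.le)]

lemma colsum {m n : ℕ} (Φ : Matrix (Fin m) (Fin n) ℝ) (a : Fin n → ℝ) (z : Fin m → ℝ) :
    (Φ *ᵥ a) ⬝ᵥ z = ∑ j, a j * ((fun k => Φ k j) ⬝ᵥ z) := by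
  simp only [Matrix.mulVec, dotProduct, Finset.sum_mul, Finset.mul_sum]
  rw [Finset.sum_comm]
  congr 1; funext j; congr 1; funext k; ring

lemma quadsq (A B C : ℝ) (h : ∀ α : ℝ, 0 ≤ A*α^2 + 2*C*α + B) : C^2 ≤ A*B := by
  have hd : discrim A (2*C) B ≤ 0 := discrim_le_zero (by intro x; nlinarith [h x])
  unfold discrim at hd
  nlinarith

/-- If `Φ` satisfies RIP of order `|S| + |Λ| + 1` with constant `δ`, `S` and `Λ` are
disjoint, `y = Φ_Λ x_Λ`, then for `i ∉ S ∪ Λ`,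
`|φᵢᵀ(I − P_S)y| ≤ δ ‖(I − P_S)φᵢ‖₂ ‖y‖₂`. -/
theorem inner_product_of_projections_upper_bound (m n : ℕ) (Φ : Matrix (Fin m) (Fin n) ℝ)
    (δ : ℝ) (hδ0 : 0 ≤ δ) (hδ1 : δ < 1)
    (S Λ : Finset (Fin n)) (hdisj : Disjoint S Λ)
    (hRIP : ∀ z : Fin n → ℝ,
      (Finset.univ.filter fun j => z j ≠ 0).card ≤ S.card + Λ.card + 1 →
      (1 - δ) * (z ⬝ᵥ z) ≤ (Φ *ᵥ z) ⬝ᵥ (Φ *ᵥ z) ∧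
        (Φ *ᵥ z) ⬝ᵥ (Φ *ᵥ z) ≤ (1 + δ) * (z ⬝ᵥ z))
    (x : Fin n → ℝ) (hxsupp : ∀ j, j ∉ Λ → x j = 0)
    (y : Fin m → ℝ) (hy : y = Φ *ᵥ x)
    (i : Fin n) (hiS : i ∉ S) (hiΛ : i ∉ Λ)
    -- `p` is the orthogonal projection of `y` onto the span of the columns of `Φ` indexed by `S`:
    (p : Fin m → ℝ) (u : Fin n → ℝ) (husupp : ∀ j, j ∉ S → u j = 0)
    (hp : p = Φ *ᵥ u)
    (horthp : ∀ j ∈ S, (fun k => Φ k j) ⬝ᵥ (y - p) = 0)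
    -- `q` is the orthogonal projection of the column `φᵢ` onto the same span:
    (q : Fin m → ℝ) (w : Fin n → ℝ) (hwsupp : ∀ j, j ∉ S → w j = 0)
    (hq : q = Φ *ᵥ w)
    (horthq : ∀ j ∈ S, (fun k => Φ k j) ⬝ᵥ ((fun k => Φ k i) - q) = 0) :
    |(fun k => Φ k i) ⬝ᵥ (y - p)| ≤
      δ * Real.sqrt (((fun k => Φ k i) - q) ⬝ᵥ ((fun k => Φ k i) - q)) * Real.sqrt (y ⬝ᵥ y) := by
  set φi : Fin m → ℝ := fun k => Φ k i with hφi
  set v : Fin n → ℝ := fun j => (if j = i then (1:ℝ) else 0) - w j with hv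
  -- Φ v = φi - q
  have hΦv : Φ *ᵥ v = φi - q := by
    funext k
    simp only [hv, Matrix.mulVec, dotProduct, hq, hφi, Pi.sub_apply, mul_sub, mul_ite,
      mul_one, mul_zero, Finset.sum_sub_distrib, Finset.sum_ite_eq', Finset.mem_univ, if_true]
  -- v ⊥ x
  have hvx : v ⬝ᵥ x = 0 := by
    apply Finset.sum_eq_zero
    intro j _
    by_cases hj : j ∈ Λ
    · have hji : j ≠ i := fun h => hiΛ (h ▸ hj)
      have hjS : j ∉ S := fun h => (hdisj.forall_ne_finset h hj) rfl
      simp [hv, hji, hwsupp j hjS]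
    · simp [hxsupp j hj]
  -- abbreviations
  set V := v ⬝ᵥ v with hV
  set X := x ⬝ᵥ x with hX
  set R := (Φ *ᵥ v) ⬝ᵥ (Φ *ᵥ v) with hR
  set Y := (Φ *ᵥ x) ⬝ᵥ (Φ *ᵥ x) with hY
  set C := (Φ *ᵥ v) ⬝ᵥ (Φ *ᵥ x) with hC
  -- sparsity
  have hsp : ∀ α β : ℝ,
      (Finset.univ.filter fun j => (α • v + β • x) j ≠ 0).card ≤ S.card + Λ.card + 1 := by
    intro α β
    have hsub : (Finset.univ.filter fun j => (α • v + β • x) j ≠ 0) ⊆ insert i S ∪ Λ := by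
      intro j hj
      simp only [Finset.mem_filter, Finset.mem_univ, true_and] at hj
      by_contra hmem
      simp only [Finset.mem_union, Finset.mem_insert, not_or] at hmem
      obtain ⟨⟨hji, hjS⟩, hjΛ⟩ := hmem
      have : v j = 0 := by simp [hv, hji, hwsupp j hjS]
      have hx0 : x j = 0 := hxsupp j hjΛ
      apply hj
      simp [this, hx0]
    calc (Finset.univ.filter fun j => (α • v + β • x) j ≠ 0).card
        ≤ (insert i S ∪ Λ).card := Finset.card_le_card hsub
      _ ≤ (insert i S).card + Λ.card := Finset.card_union_le _ _
      _ ≤ S.card + 1 + Λ.card := by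
          have := Finset.card_insert_le i S
          omega
      _ = S.card + Λ.card + 1 := by ring
  -- quadratic bounds
  have hquad : ∀ α β : ℝ,
      (1 - δ) * (α^2*V + β^2*X) ≤ α^2*R + 2*α*β*C + β^2*Y ∧
      α^2*R + 2*α*β*C + β^2*Y ≤ (1 + δ) * (α^2*V + β^2*X) := by
    intro α β
    obtain ⟨hl, hu⟩ := hRIP (α • v + β • x) (hsp α β)
    have hxv : x ⬝ᵥ v = 0 := (dotProduct_comm v x) ▸ hvx
    have e1 : (α • v + β • x) ⬝ᵥ (α • v + β • x) = α^2*V + β^2*X := by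
      simp only [add_dotProduct, dotProduct_add, smul_dotProduct,
        dotProduct_smul, smul_eq_mul, hvx, hxv]
      ring
    have e2 : (Φ *ᵥ (α • v + β • x)) ⬝ᵥ (Φ *ᵥ (α • v + β • x)) = α^2*R + 2*α*β*C + β^2*Y := by
      rw [Matrix.mulVec_add, Matrix.mulVec_smul, Matrix.mulVec_smul]
      have hcx : (Φ *ᵥ x) ⬝ᵥ (Φ *ᵥ v) = C := dotProduct_comm _ _
      simp only [add_dotProduct, dotProduct_add, smul_dotProduct,
        dotProduct_smul, smul_eq_mul, hcx]
      rw [← hR, ← hY, ← hC]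
      ring
    rw [e1, e2] at hl hu
    exact ⟨hl, hu⟩
  -- nonnegativity
  have hV0 : 0 ≤ V := Finset.sum_nonneg fun j _ => mul_self_nonneg _
  have hX0 : 0 ≤ X := Finset.sum_nonneg fun j _ => mul_self_nonneg _
  have hR0 : 0 ≤ R := Finset.sum_nonneg fun j _ => mul_self_nonneg _
  have hY0 : 0 ≤ Y := Finset.sum_nonneg fun j _ => mul_self_nonneg _
  -- bounds on R, Y
  have hRb := hquad 1 0
  have hYb := hquad 0 1
  have hR1 : (1-δ)*V ≤ R := by nlinarith [hRb.1]
  have hR2 : R ≤ (1+δ)*V := by nlinarith [hRb.2]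
  have hY1 : (1-δ)*X ≤ Y := by nlinarith [hYb.1]
  have hY2 : Y ≤ (1+δ)*X := by nlinarith [hYb.2]
  -- discriminant bounds
  have h1 : C^2 ≤ (R-(1-δ)*V)*(Y-(1-δ)*X) := by
    apply quadsq
    intro α
    have := (hquad α 1).1
    nlinarith
  have h2 : C^2 ≤ ((1+δ)*V-R)*((1+δ)*X-Y) := by
    have := quadsq ((1+δ)*V-R) ((1+δ)*X-Y) (-C) (by
      intro α
      have := (hquad α 1).2
      nlinarith)
    nlinarith
  have hC2 : C^2 ≤ δ^2*R*Y := key' δ V X R Y C hδ0 hδ1.le hV0 hX0 hR1 hR2 hY1 hY2 h1 h2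
  -- reduce LHS to C
  have hqyp : q ⬝ᵥ (y - p) = 0 := by
    rw [hq, colsum]
    apply Finset.sum_eq_zero
    intro j _
    by_cases hj : j ∈ S
    · rw [horthp j hj, mul_zero]
    · rw [hwsupp j hj, zero_mul]
  have hrp : (φi - q) ⬝ᵥ p = 0 := by
    rw [dotProduct_comm, hp, colsum]
    apply Finset.sum_eq_zero
    intro j _
    by_cases hj : j ∈ S
    · rw [horthq j hj, mul_zero]
    · rw [husupp j hj, zero_mul]
  have hLHS : φi ⬝ᵥ (y - p) = C := by
    have e1 : φi ⬝ᵥ (y - p) = (φi - q) ⬝ᵥ (y - p) := by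
      rw [sub_dotProduct, hqyp, sub_zero]
    rw [e1, dotProduct_sub, hrp, sub_zero, ← hΦv, hC, hy]
  rw [hLHS, ← hΦv, hy, ← hR, ← hY]
  have habs : |C| = Real.sqrt (C^2) := (Real.sqrt_sq_eq_abs _).symm
  rw [habs]
  calc Real.sqrt (C^2) ≤ Real.sqrt (δ^2*R*Y) := Real.sqrt_le_sqrt hC2
    _ = δ * Real.sqrt R * Real.sqrt Y := by
        rw [Real.sqrt_mul (mul_nonneg (sq_nonneg δ) hR0), Real.sqrt_mul (sq_nonneg δ), Real.sqrt_sq hδ0]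
end
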